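/- Strong local minimality transfers from the original cost to the FBE (Theorem 2 direction): let 0 < γ < 1/L, let u⋆ ∈ E be a critical point with u⋆ ∈ T_γ(u⋆), and suppose there is a function T : E → E with T(u) ∈ T_γ(u) for all u, T(u⋆) = u⋆, which is Lipschitz continuous at u⋆, i.e., there exist κ ≥ 0 and δ > 0 such that ‖T(u) − u⋆‖ ≤ κ‖u − u⋆‖ whenever ‖u − u⋆‖ < δ. If u⋆ is a strong local minimum of φ (there exist c > 0 and ρ > 0 with φ(u) ≥ φ(u⋆) + c‖u − u⋆‖² for all ‖u − u⋆‖ < ρ), then u⋆ is a strong local minimum of φ_γ (there exist c' > 0 and ρ' > 0 with φ_γ(u) ≥ φ_γ(u⋆) + c'‖u − u⋆‖² for all ‖u − u⋆‖ < ρ'). -/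

import Mathlib

open scoped RealInnerProductSpace
open Filter Topology Asymptotics

/-- Moreau envelope `g^γ(v) = inf_w { g(w) + (1/(2γ))‖w − v‖² }` of an
extended-real-valued function `g`. -/
noncomputable def moreauEnv {E : Type*} [NormedAddCommGroup E] [InnerProductSpace ℝ E]
    (g : E → EReal) (γ : ℝ) (v : E) : EReal :=
  ⨅ w : E, g w + (((1 / (2 * γ)) * ‖w - v‖ ^ 2 : ℝ) : EReal)

/-- The (set-valued) proximal mapping
`prox_{γg}(v) = argmin_w { g(w) + (1/(2γ))‖w − v‖² }`. -/
def proxSet {E : Type*} [NormedAddCommGroup E] [InnerProductSpace ℝ E]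
    (g : E → EReal) (γ : ℝ) (v : E) : Set E :=
  {w | ∀ w' : E, g w + (((1 / (2 * γ)) * ‖w - v‖ ^ 2 : ℝ) : EReal)
      ≤ g w' + (((1 / (2 * γ)) * ‖w' - v‖ ^ 2 : ℝ) : EReal)}

/-- The forward–backward envelope
`φ_γ(u) = ℓ(u) − (γ/2)‖∇ℓ(u)‖² + g^γ(u − γ∇ℓ(u))`, where `l'` plays the role
of the gradient `∇ℓ`. -/
noncomputable def fbe {E : Type*} [NormedAddCommGroup E] [InnerProductSpace ℝ E]
    (l : E → ℝ) (l' : E → E) (g : E → EReal) (γ : ℝ) (u : E) : EReal :=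
  ((l u - (γ / 2) * ‖l' u‖ ^ 2 : ℝ) : EReal) + moreauEnv g γ (u - γ • l' u)

/-! With `w = T u`, the forward–backward envelope equals
`ℓ(u) + ⟪∇ℓ(u), w - u⟫ + ‖w - u‖² / (2γ) + g(w)`, so the descent lemma gives
`φ_γ(u) ≥ φ(w) + (1/(2γ) - L/2) ‖w - u‖²`, with a positive coefficient since `γL < 1`;
at the fixed point `u⋆` the envelope equals `φ(u⋆)`. For `u` close to `u⋆`, the Lipschitz
bound on `T` keeps `w` in the ball where `φ(w) ≥ φ(u⋆) + c ‖w - u⋆‖²`, and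
`‖u - u⋆‖² ≤ 2 ‖w - u⋆‖² + 2 ‖w - u‖²` merges the two quadratic terms. -/

section Descent

variable {E : Type*} [NormedAddCommGroup E] [InnerProductSpace ℝ E] [CompleteSpace E]

theorem HasGradientAt.hasDerivAt_comp_add_smul {l : E → ℝ} {g x d : E} {t : ℝ}
    (h : HasGradientAt l g (x + t • d)) :
    HasDerivAt (fun s : ℝ => l (x + s • d)) ⟪g, d⟫ t := by
  have hline : HasDerivAt (fun s : ℝ => x + s • d) d t := by
    simpa using ((hasDerivAt_id t).smul_const d).const_add x
  have hcomp := h.hasFDerivAt.comp_hasDerivAt t hline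
  simp only [InnerProductSpace.toDual_apply_apply] at hcomp
  exact hcomp

theorem le_add_inner_add_sq_of_lipschitz_gradient {l : E → ℝ} {l' : E → E} {L : ℝ}
    (hgrad : ∀ x, HasGradientAt l (l' x) x) (hlip : ∀ x y, ‖l' x - l' y‖ ≤ L * ‖x - y‖)
    (x y : E) : l y ≤ l x + ⟪l' x, y - x⟫ + L / 2 * ‖y - x‖ ^ 2 := by
  set d := y - x
  set f : ℝ → ℝ := fun t => l x + t * ⟪l' x, d⟫ + L / 2 * t ^ 2 * ‖d‖ ^ 2 - l (x + t • d)
  have hf : ∀ t, HasDerivAt f (⟪l' x, d⟫ + L * t * ‖d‖ ^ 2 - ⟪l' (x + t • d), d⟫) t := by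
    intro t
    have hquad := (((hasDerivAt_id t).mul_const ⟪l' x, d⟫).const_add (l x)).add
      (((hasDerivAt_pow 2 t).const_mul (L / 2)).mul_const (‖d‖ ^ 2))
    refine (hquad.sub (hgrad _).hasDerivAt_comp_add_smul).congr_deriv ?_
    simp only [one_mul, Nat.cast_ofNat, Nat.add_one_sub_one, pow_one]
    ring
  have hslope : ∀ t : ℝ, 0 ≤ t → ⟪l' (x + t • d), d⟫ ≤ ⟪l' x, d⟫ + L * t * ‖d‖ ^ 2 := by
    intro t ht
    have hdist : ‖l' (x + t • d) - l' x‖ ≤ L * (t * ‖d‖) := by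
      simpa [norm_smul, abs_of_nonneg ht] using hlip (x + t • d) x
    calc ⟪l' (x + t • d), d⟫ = ⟪l' x, d⟫ + ⟪l' (x + t • d) - l' x, d⟫ := by
          rw [inner_sub_left]; ring
      _ ≤ ⟪l' x, d⟫ + L * (t * ‖d‖) * ‖d‖ := by
          gcongr
          exact (real_inner_le_norm _ _).trans
            (mul_le_mul_of_nonneg_right hdist (norm_nonneg d))
      _ = ⟪l' x, d⟫ + L * t * ‖d‖ ^ 2 := by ring
  have hmono : MonotoneOn f (Set.Icc 0 1) := by
    refine monotoneOn_of_hasDerivWithinAt_nonneg (convex_Icc 0 1)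
      (fun t _ => (hf t).continuousAt.continuousWithinAt)
      (fun t _ => (hf t).hasDerivWithinAt) fun t ht => ?_
    rw [interior_Icc] at ht
    linarith [hslope t ht.1.le]
  have h01 := hmono (Set.left_mem_Icc.2 zero_le_one) (Set.right_mem_Icc.2 zero_le_one)
    zero_le_one
  simp only [f, d, zero_smul, one_smul, add_zero, add_sub_cancel] at h01
  linarith

end Descent

theorem min_div_two_mul_norm_sub_sq_le {F : Type*} [SeminormedAddCommGroup F] {a b : ℝ}
    (ha : 0 ≤ a) (hb : 0 ≤ b) (x y z : F) :
    min a b / 2 * ‖x - z‖ ^ 2 ≤ a * ‖y - z‖ ^ 2 + b * ‖y - x‖ ^ 2 := by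
  have htri : ‖x - z‖ ≤ ‖y - x‖ + ‖y - z‖ := by
    simpa only [norm_sub_rev x y] using norm_sub_le_norm_sub_add_norm_sub x y z
  have hsq : ‖x - z‖ ^ 2 ≤ 2 * ‖y - z‖ ^ 2 + 2 * ‖y - x‖ ^ 2 := by
    nlinarith [sq_nonneg (‖y - x‖ - ‖y - z‖), norm_nonneg (x - z)]
  have hmin : 0 ≤ min a b := le_min ha hb
  calc min a b / 2 * ‖x - z‖ ^ 2 ≤ min a b * ‖y - z‖ ^ 2 + min a b * ‖y - x‖ ^ 2 := by
        nlinarith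
    _ ≤ a * ‖y - z‖ ^ 2 + b * ‖y - x‖ ^ 2 := by
        gcongr
        exacts [min_le_left a b, min_le_right a b]

section ForwardBackwardEnvelope

variable {E : Type*} [NormedAddCommGroup E] [InnerProductSpace ℝ E]
  {l : E → ℝ} {l' : E → E} {g : E → EReal} {γ : ℝ} {u v w : E}

theorem moreauEnv_eq_of_mem_proxSet (hw : w ∈ proxSet g γ v) :
    moreauEnv g γ v = g w + ((1 / (2 * γ) * ‖w - v‖ ^ 2 : ℝ) : EReal) :=
  le_antisymm (iInf_le _ w) (le_iInf hw)

theorem fbe_eq_of_mem_proxSet (hγ : γ ≠ 0) (hw : w ∈ proxSet g γ (u - γ • l' u)) :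
    fbe l l' g γ u = ((l u + ⟪l' u, w - u⟫ + 1 / (2 * γ) * ‖w - u‖ ^ 2 : ℝ) : EReal) + g w := by
  have hsq : ‖w - (u - γ • l' u)‖ ^ 2
      = ‖w - u‖ ^ 2 + 2 * γ * ⟪l' u, w - u⟫ + γ ^ 2 * ‖l' u‖ ^ 2 := by
    rw [show w - (u - γ • l' u) = (w - u) + γ • l' u by abel, norm_add_sq_real,
      real_inner_smul_right, norm_smul, Real.norm_eq_abs, mul_pow, sq_abs, real_inner_comm]
    ring
  rw [fbe, moreauEnv_eq_of_mem_proxSet hw, add_comm (g w), ← add_assoc, ← EReal.coe_add, hsq]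
  congr 2
  field_simp
  ring

theorem fbe_eq_of_mem_proxSet_self (hγ : γ ≠ 0) (hu : u ∈ proxSet g γ (u - γ • l' u)) :
    fbe l l' g γ u = (l u : EReal) + g u := by
  simp [fbe_eq_of_mem_proxSet hγ hu]

theorem add_sq_le_fbe_of_mem_proxSet [CompleteSpace E] {L : ℝ}
    (hgrad : ∀ x, HasGradientAt l (l' x) x) (hlip : ∀ x y, ‖l' x - l' y‖ ≤ L * ‖x - y‖)
    (hγ : γ ≠ 0) (hw : w ∈ proxSet g γ (u - γ • l' u)) :
    (l w : EReal) + g w + (((1 / (2 * γ) - L / 2) * ‖w - u‖ ^ 2 : ℝ) : EReal) ≤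
      fbe l l' g γ u := by
  have hdescent := le_add_inner_add_sq_of_lipschitz_gradient hgrad hlip u w
  rw [fbe_eq_of_mem_proxSet hγ hw, add_right_comm, ← EReal.coe_add]
  refine add_le_add (EReal.coe_le_coe_iff.2 ?_) le_rfl
  linarith

end ForwardBackwardEnvelope

theorem strong_local_min_cost_to_fbe_general
    {E : Type*} [NormedAddCommGroup E] [InnerProductSpace ℝ E] [FiniteDimensional ℝ E]
    (l : E → ℝ) (l' : E → E) (g : E → EReal) (L γ : ℝ)
    (hγ : 0 < γ)
    (hgrad : ∀ x : E, HasGradientAt l (l' x) x)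
    (hlip : ∀ x y : E, ‖l' x - l' y‖ ≤ L * ‖x - y‖)
    (hγL : γ < 1 / L)
    (ustar : E) (hfix : ustar ∈ proxSet g γ (ustar - γ • l' ustar))
    (T : E → E) (hT : ∀ u : E, T u ∈ proxSet g γ (u - γ • l' u))
    (κ δ : ℝ) (hκ : 0 ≤ κ) (hδ : 0 < δ)
    (hTlip : ∀ u : E, ‖u - ustar‖ < δ → ‖T u - ustar‖ ≤ κ * ‖u - ustar‖)
    (c ρ : ℝ) (hc : 0 < c) (hρ : 0 < ρ)
    (hmin : ∀ u : E, ‖u - ustar‖ < ρ →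
      ((l ustar : EReal) + g ustar) + ((c * ‖u - ustar‖ ^ 2 : ℝ) : EReal) ≤
        (l u : EReal) + g u) :
    ∃ c' > (0 : ℝ), ∃ ρ' > (0 : ℝ), ∀ u : E, ‖u - ustar‖ < ρ' →
      fbe l l' g γ ustar + ((c' * ‖u - ustar‖ ^ 2 : ℝ) : EReal) ≤ fbe l l' g γ u := by
  set σ := 1 / (2 * γ) - L / 2
  have hσ : 0 < σ := by
    have hL : 0 < L := one_div_pos.mp (hγ.trans hγL)
    rw [lt_div_iff₀ hL] at hγL
    rw [sub_pos, div_lt_div_iff₀ (by positivity) (by positivity)]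
    linarith
  refine ⟨min c σ / 2, by positivity, min δ (ρ / (κ + 1)), by positivity, fun u hu => ?_⟩
  have hTu : ‖T u - ustar‖ < ρ := calc
    ‖T u - ustar‖ ≤ κ * ‖u - ustar‖ := hTlip u (hu.trans_le (min_le_left _ _))
    _ ≤ κ * (ρ / (κ + 1)) := by gcongr; exact hu.le.trans (min_le_right _ _)
    _ < ρ := by rw [mul_div_assoc', div_lt_iff₀ (by positivity)]; linarith
  calc fbe l l' g γ ustar + ((min c σ / 2 * ‖u - ustar‖ ^ 2 : ℝ) : EReal)
      ≤ (l ustar : EReal) + g ustar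
          + ((c * ‖T u - ustar‖ ^ 2 + σ * ‖T u - u‖ ^ 2 : ℝ) : EReal) := by
        rw [fbe_eq_of_mem_proxSet_self hγ.ne' hfix]
        exact add_le_add le_rfl (EReal.coe_le_coe_iff.2
          (min_div_two_mul_norm_sub_sq_le hc.le hσ.le u (T u) ustar))
    _ = (l ustar : EReal) + g ustar + ((c * ‖T u - ustar‖ ^ 2 : ℝ) : EReal)
          + ((σ * ‖T u - u‖ ^ 2 : ℝ) : EReal) := by rw [EReal.coe_add, ← add_assoc]
    _ ≤ (l (T u) : EReal) + g (T u) + ((σ * ‖T u - u‖ ^ 2 : ℝ) : EReal) :=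
        add_le_add (hmin _ hTu) le_rfl
    _ ≤ fbe l l' g γ u := add_sq_le_fbe_of_mem_proxSet hgrad hlip hγ.ne' (hT u)

/-- strong local minimality transfers from the original cost to
the FBE, assuming a forward–backward selection that is Lipschitz at the
critical point. -/
theorem strong_local_min_cost_to_fbe
    {E : Type*} [NormedAddCommGroup E] [InnerProductSpace ℝ E] [FiniteDimensional ℝ E]
    (l : E → ℝ) (l' : E → E) (g : E → EReal) (L γ : ℝ)
    (hL : 0 < L) (hγ : 0 < γ)
    (hgrad : ∀ x : E, HasGradientAt l (l' x) x)
    (hlip : ∀ x y : E, ‖l' x - l' y‖ ≤ L * ‖x - y‖)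
    (hproper : ∃ x : E, g x ≠ ⊤) (hbot : ∀ x : E, g x ≠ ⊥)
    (hlsc : LowerSemicontinuous g)
    (hbdd : ∃ m : ℝ, ∀ x : E, (m : EReal) ≤ g x)
    (hγL : γ < 1 / L)
    (ustar : E) (hfix : ustar ∈ proxSet g γ (ustar - γ • l' ustar))
    (T : E → E) (hT : ∀ u : E, T u ∈ proxSet g γ (u - γ • l' u))
    (hTfix : T ustar = ustar)
    (κ δ : ℝ) (hκ : 0 ≤ κ) (hδ : 0 < δ)
    (hTlip : ∀ u : E, ‖u - ustar‖ < δ → ‖T u - ustar‖ ≤ κ * ‖u - ustar‖)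
    (c ρ : ℝ) (hc : 0 < c) (hρ : 0 < ρ)
    (hmin : ∀ u : E, ‖u - ustar‖ < ρ →
      ((l ustar : EReal) + g ustar) + ((c * ‖u - ustar‖ ^ 2 : ℝ) : EReal) ≤
        (l u : EReal) + g u) :
    ∃ c' > (0 : ℝ), ∃ ρ' > (0 : ℝ), ∀ u : E, ‖u - ustar‖ < ρ' →
      fbe l l' g γ ustar + ((c' * ‖u - ustar‖ ^ 2 : ℝ) : EReal) ≤ fbe l l' g γ u :=
  strong_local_min_cost_to_fbe_general l l' g L γ hγ hgrad hlip hγL ustar hfix T hT κ δ hκ hδ hTlip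
    c ρ hc hρ hmin
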